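/- arXiv:1404.4914 — 2 statements merged into one kernel-verified Lean document; each statement's English description precedes it below -/
import Mathlib

section
/- With the data of the construction of M(a,α,p,q), assume α = 0. Then the holomorphic vector field H^{a,0}(z₁,z₂) = z₁·a(z₂)·∂/∂z₁ + iz₂·∂/∂z₂ is tangent to M(a,0,p,q), i.e. Re[ z₁·a(z₂)·(1/2 + Q₀(z₂)/(2i)) + iz₂·(P₁_{z₂}(z₂) + (Im z₁)·Q₀_{z₂}(z₂)) ] = 0 for all (z₁,z₂) ∈ M(a,0,p,q). -/
open Complex Metric Set

/-- The Wirtinger derivative `u_z = (∂u/∂x − i ∂u/∂y)/2` of `u` at `z`. -/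
noncomputable def wirt (u : ℂ → ℂ) (z : ℂ) : ℂ :=
  (fderiv ℝ u z 1 - Complex.I * fderiv ℝ u z Complex.I) / 2

/-- The holomorphic function `a(z) = Σ_{n≥1} aₙ zⁿ` (with `a 0 = 0`). -/
noncomputable def Afn (a : ℕ → ℂ) (z : ℂ) : ℂ := ∑' n : ℕ, a n * z ^ n

/-- The primitive-type series `Σ_{n≥1} (aₙ/n) zⁿ`. -/
noncomputable def Sfn (a : ℕ → ℂ) (z : ℂ) : ℂ := ∑' n : ℕ, a n / (n : ℂ) * z ^ n

/-- The series `Σ_{n≥1} (aₙ/(i n)) zⁿ`. -/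
noncomputable def Tfn (a : ℕ → ℂ) (z : ℂ) : ℂ :=
  ∑' n : ℕ, a n / (Complex.I * (n : ℂ)) * z ^ n

/-- `R(z₂) = q(|z₂|) − Re (Σ_{n≥1} (aₙ/n) z₂ⁿ)`. -/
noncomputable def Rfn (a : ℕ → ℂ) (q : ℝ → ℝ) (z : ℂ) : ℝ :=
  q ‖z‖ - (Sfn a z).re

/-- `Q₀(z₂) = tan (R(z₂))`. -/
noncomputable def Q0fn (a : ℕ → ℂ) (q : ℝ → ℝ) (z : ℂ) : ℝ := Real.tan (Rfn a q z)

/-- `P₁(z₂) = exp[p(|z₂|) + Re (Σ (aₙ/(i n)) z₂ⁿ) − log |cos (R(z₂))|]` for `z₂ ≠ 0`,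
`P₁(0) = 0`. -/
noncomputable def P1fn (a : ℕ → ℂ) (q p : ℝ → ℝ) (z : ℂ) : ℝ :=
  if z = 0 then 0
  else Real.exp (p ‖z‖ + (Tfn a z).re - Real.log |Real.cos (Rfn a q z)|)

/-- `f(z₂,t) = −(1/α) log |cos(R(z₂)+αt)/cos(R(z₂))|` if `α ≠ 0`, `tan(R(z₂))·t` if `α = 0`. -/
noncomputable def ffn (α : ℝ) (a : ℕ → ℂ) (q : ℝ → ℝ) (z : ℂ) (t : ℝ) : ℝ :=
  if α = 0 then Real.tan (Rfn a q z) * t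
  else -(1 / α) * Real.log |Real.cos (Rfn a q z + α * t) / Real.cos (Rfn a q z)|

/-- `P = (1/α) log(1 + α P₁)` if `α ≠ 0`, `P = P₁` if `α = 0`. -/
noncomputable def Pfn (α : ℝ) (a : ℕ → ℂ) (q p : ℝ → ℝ) (z : ℂ) : ℝ :=
  if α = 0 then P1fn a q p z else (1 / α) * Real.log (1 + α * P1fn a q p z)

/-- `L^α(z₁) = (e^{αz₁} − 1)/α` if `α ≠ 0`, `L⁰(z₁) = z₁`. -/
noncomputable def Lfn (α : ℝ) (z : ℂ) : ℂ :=
  if α = 0 then z else (Complex.exp ((α : ℂ) * z) - 1) / (α : ℂ)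

/-!
For real `u`, `Re (i z · u_z) = du(iz) / 2` is half the derivative of `u` along the rotation
`θ ↦ e^{iθ} z`. On these circles `R + Re S = q(|z|)` and `log P₁ - Re T + log cos R = p(|z|)`
are constant, while `Re T = Im S` and `z S'(z) = a(z)`; differentiating gives `dR(iz) = Im a`,
`dQ₀(iz) = (1 + Q₀²) Im a` and `dP₁(iz) = P₁ (Re a + Q₀ Im a)`. Substituting, the real part in
question is `(Re z₁ + P₁ + Q₀ Im z₁)(Re a + Q₀ Im a) / 2`, which vanishes on `M(a,0,p,q)`.
-/
lemma re_mul_wirt_ofReal {u : ℂ → ℝ} {L : ℂ →L[ℝ] ℝ} {z : ℂ} (hu : HasFDerivAt u L z) (v : ℂ) :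
    (v * wirt (fun w => (u w : ℂ)) z).re = L v / 2 := by
  have hv : v = v.re • (1 : ℂ) + v.im • I := by simp
  have hU : HasFDerivAt (fun w => (u w : ℂ)) (ofRealCLM.comp L) z :=
    ofRealCLM.hasFDerivAt.comp z hu
  rw [wirt, hU.fderiv]
  conv_rhs => rw [hv, map_add, map_smul, map_smul]
  simp [Complex.mul_re]
  ring

lemma hasDerivAt_exp_ofReal_mul_I_mul (z : ℂ) :
    HasDerivAt (fun θ : ℝ => exp (θ * I) * z) (I * z) 0 := by
  simpa using ((((hasDerivAt_id ((0 : ℝ) : ℂ)).mul_const I).cexp).mul_const z).comp_ofReal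

lemma HasFDerivAt.apply_I_mul_eq_zero_of_forall_norm_eq {g : ℂ → ℝ} {L : ℂ →L[ℝ] ℝ}
    {z : ℂ} (hg : HasFDerivAt g L z) (hconst : ∀ w, ‖w‖ = ‖z‖ → g w = g z) :
    L (I * z) = 0 := by
  have hcirc := hg.comp_hasDerivAt_of_eq (0 : ℝ) (hasDerivAt_exp_ofReal_mul_I_mul z) (by simp)
  have hflat : g ∘ (fun θ : ℝ => Complex.exp (θ * I) * z) = fun _ => g z := by
    funext θ
    exact hconst _ (by simp [norm_exp_ofReal_mul_I])
  rw [hflat] at hcirc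
  exact hcirc.unique (hasDerivAt_const _ _)

lemma norm_div_natCast_mul_pow_le (c : ℂ) (n : ℕ) {w : ℂ} {r : ℝ} (hw : ‖w‖ ≤ r) :
    ‖c / n * w ^ n‖ ≤ ‖c * (r : ℂ) ^ n‖ := by
  have hr : 0 ≤ r := (norm_nonneg w).trans hw
  have hc : ‖c / n‖ ≤ ‖c‖ := by
    rcases n.eq_zero_or_pos with rfl | hn
    · simp
    · rw [norm_div, Complex.norm_natCast]
      exact div_le_self (norm_nonneg c) (by exact_mod_cast hn)
  rw [norm_mul, norm_mul, norm_pow, norm_pow, Complex.norm_real, Real.norm_of_nonneg hr]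
  gcongr

lemma exists_hasDerivAt_Sfn_mul_eq_Afn {a : ℕ → ℂ} (ha0 : a 0 = 0) {r : ℝ}
    (hr : Summable fun n => a n * (r : ℂ) ^ n) {z : ℂ} (hz : ‖z‖ < r) :
    ∃ S', HasDerivAt (Sfn a) S' z ∧ z * S' = Afn a z := by
  have hu : Summable fun n => ‖a n * (r : ℂ) ^ n‖ := summable_norm_iff.2 hr
  have hF (n : ℕ) : DifferentiableOn ℂ (fun w : ℂ => a n / n * w ^ n) (ball 0 r) :=
    ((differentiable_pow n).const_mul _).differentiableOn
  have hle (n : ℕ) (w : ℂ) (hw : w ∈ ball (0 : ℂ) r) : ‖a n / n * w ^ n‖ ≤ ‖a n * (r : ℂ) ^ n‖ :=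
    norm_div_natCast_mul_pow_le _ _ (mem_ball_zero_iff.1 hw).le
  have hz' : z ∈ ball (0 : ℂ) r := mem_ball_zero_iff.2 hz
  refine ⟨deriv (Sfn a) z, ((Complex.differentiableOn_tsum_of_summable_norm hu hF isOpen_ball
    hle z hz').differentiableAt (isOpen_ball.mem_nhds hz')).hasDerivAt, ?_⟩
  have hsum := (Complex.hasSum_deriv_of_summable_norm hu hF isOpen_ball hle hz').mul_left z
  rw [Afn, show Sfn a = fun w => ∑' n : ℕ, a n / n * w ^ n from rfl, ← hsum.tsum_eq]
  congr 1
  funext n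
  rw [((hasDerivAt_pow n z).const_mul _).deriv]
  -- the `n = 0` term of `Sfn` is the junk value `a 0 / 0 = 0`, while that of `Afn` is `a 0`
  rcases n with _ | n
  · simp [ha0]
  · rw [Nat.add_sub_cancel]
    field_simp
    ring

lemma re_Tfn (a : ℕ → ℂ) (z : ℂ) : (Tfn a z).re = (Sfn a z).im := by
  have hT : Tfn a z = -I * Sfn a z := by
    rw [Tfn, Sfn, ← tsum_mul_left]
    congr 1
    funext n
    rw [div_eq_mul_inv, mul_inv, inv_I, div_eq_mul_inv]
    ring
  simp [hT]

section
variable {a : ℕ → ℂ} {q p : ℝ → ℝ} {z S' : ℂ}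

lemma fderiv_Rfn_apply_I_mul (hR : DifferentiableAt ℝ (Rfn a q) z)
    (hS : HasDerivAt (Sfn a) S' z) (hzS : z * S' = Afn a z) :
    fderiv ℝ (Rfn a q) z (I * z) = (Afn a z).im := by
  have hg := hR.hasFDerivAt.add (reCLM.hasFDerivAt.comp z (hS.hasFDerivAt.restrictScalars ℝ))
  have h0 := hg.apply_I_mul_eq_zero_of_forall_norm_eq fun w hw => by
    simp only [Pi.add_apply, Function.comp_apply, reCLM_apply, Rfn, sub_add_cancel, hw]
  simp only [_root_.add_apply, ContinuousLinearMap.comp_apply,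
    ContinuousLinearMap.coe_restrictScalars', ContinuousLinearMap.toSpanSingleton_apply,
    reCLM_apply, smul_eq_mul, mul_assoc, hzS, I_mul_re] at h0
  linarith

lemma fderiv_Q0fn_apply_I_mul (hcos : Real.cos (Rfn a q z) ≠ 0)
    (hR : DifferentiableAt ℝ (Rfn a q) z) (hS : HasDerivAt (Sfn a) S' z)
    (hzS : z * S' = Afn a z) :
    fderiv ℝ (Q0fn a q) z (I * z) = (1 + Q0fn a q z ^ 2) * (Afn a z).im := by
  have hQ : HasFDerivAt (Q0fn a q) ((1 / Real.cos (Rfn a q z) ^ 2) • fderiv ℝ (Rfn a q) z) z :=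
    (Real.hasDerivAt_tan hcos).comp_hasFDerivAt z hR.hasFDerivAt
  rw [hQ.fderiv, _root_.smul_apply, fderiv_Rfn_apply_I_mul hR hS hzS, smul_eq_mul,
    one_div, ← Real.inv_one_add_tan_sq hcos, inv_inv, Q0fn]

lemma log_P1fn_sub_im_Sfn_add_log_cos {w : ℂ} (hw : w ≠ 0) (hcos : 0 < Real.cos (Rfn a q w)) :
    Real.log (P1fn a q p w) - (Sfn a w).im + Real.log (Real.cos (Rfn a q w)) = p ‖w‖ := by
  rw [P1fn, if_neg hw, Real.log_exp, abs_of_pos hcos, re_Tfn]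
  ring

lemma fderiv_P1fn_apply_I_mul (hP : DifferentiableAt ℝ (P1fn a q p) z)
    (hR : DifferentiableAt ℝ (Rfn a q) z) (hS : HasDerivAt (Sfn a) S' z)
    (hzS : z * S' = Afn a z) (hcos : ∀ w, ‖w‖ = ‖z‖ → 0 < Real.cos (Rfn a q w)) :
    fderiv ℝ (P1fn a q p) z (I * z) =
      P1fn a q p z * ((Afn a z).re + Q0fn a q z * (Afn a z).im) := by
  rcases eq_or_ne z 0 with rfl | hz
  · simp [P1fn]
  have hP1 : 0 < P1fn a q p z := by
    rw [P1fn, if_neg hz]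
    exact Real.exp_pos _
  have hcz := hcos z rfl
  have hg := (((Real.hasDerivAt_log hP1.ne').comp_hasFDerivAt z hP.hasFDerivAt).sub
    (imCLM.hasFDerivAt.comp z (hS.hasFDerivAt.restrictScalars ℝ))).add
    ((Real.hasDerivAt_log hcz.ne').comp_hasFDerivAt z
      ((Real.hasDerivAt_cos _).comp_hasFDerivAt z hR.hasFDerivAt))
  have h0 := hg.apply_I_mul_eq_zero_of_forall_norm_eq fun w hw => by
    have hw0 : w ≠ 0 := by
      rintro rfl
      exact hz (norm_eq_zero.1 (by simpa using hw.symm))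
    simp only [Pi.add_apply, Pi.sub_apply, Function.comp_apply, imCLM_apply]
    rw [log_P1fn_sub_im_Sfn_add_log_cos hw0 (hcos w hw),
      log_P1fn_sub_im_Sfn_add_log_cos hz hcz, hw]
  simp only [_root_.add_apply, _root_.sub_apply, _root_.smul_apply,
    ContinuousLinearMap.comp_apply, ContinuousLinearMap.coe_restrictScalars', ContinuousLinearMap.toSpanSingleton_apply,
    imCLM_apply, smul_eq_mul, mul_assoc, hzS, I_mul_im, fderiv_Rfn_apply_I_mul hR hS hzS] at h0
  rw [Q0fn, Real.tan_eq_sin_div_cos]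
  field_simp at h0 ⊢
  linear_combination h0

end

lemma re_mul_half_add_ofReal_div_two_I (w : ℂ) (t : ℝ) :
    (w * ((1 / 2 : ℂ) + (t : ℂ) / (2 * I))).re = (w.re + t * w.im) / 2 := by
  simp [Complex.mul_re, Complex.mul_im, div_eq_mul_inv, Complex.inv_I]
  ring

theorem stmt7_general
    (ε₀ : ℝ)
    (a : ℕ → ℂ) (ha0 : a 0 = 0)
    (hsum : ∀ z ∈ ball (0:ℂ) ε₀, Summable fun n : ℕ => a n * z ^ n)
    (q : ℝ → ℝ)
    (hR : ContDiffOn ℝ 1 (Rfn a q) (ball 0 ε₀))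
    (hRle : ∀ z ∈ ball (0:ℂ) ε₀, |Rfn a q z| ≤ 1)
    (p : ℝ → ℝ)
    (hP₁ : ContDiffOn ℝ 1 (P1fn a q p) (ball 0 ε₀)) :
    ∀ z₁ z₂ : ℂ, z₂ ∈ ball (0:ℂ) ε₀ →
      z₁.re + P1fn a q p z₂ + Q0fn a q z₂ * z₁.im = 0 →
      (z₁ * Afn a z₂ * ((1 / 2 : ℂ) + ((Q0fn a q z₂ : ℝ) : ℂ) / (2 * Complex.I)) +
        Complex.I * z₂ * (wirt (fun w => ((P1fn a q p w : ℝ) : ℂ)) z₂ +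
          ((z₁.im : ℝ) : ℂ) * wirt (fun w => ((Q0fn a q w : ℝ) : ℂ)) z₂)).re = 0 := by
  intro z₁ z₂ hz₂ hM
  have hz₂' : ‖z₂‖ < ε₀ := mem_ball_zero_iff.1 hz₂
  obtain ⟨r, hzr, hrε⟩ := exists_between hz₂'
  have hr : (r : ℂ) ∈ ball (0 : ℂ) ε₀ := by
    rwa [mem_ball_zero_iff, Complex.norm_real, Real.norm_of_nonneg ((norm_nonneg _).trans hzr.le)]
  obtain ⟨S', hS, hzS⟩ := exists_hasDerivAt_Sfn_mul_eq_Afn ha0 (hsum _ hr) hzr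
  have hcos (w : ℂ) (hw : ‖w‖ = ‖z₂‖) : 0 < Real.cos (Rfn a q w) :=
    Real.cos_pos_of_le_one (hRle w (mem_ball_zero_iff.2 (hw ▸ hz₂')))
  have hRd : DifferentiableAt ℝ (Rfn a q) z₂ :=
    (hR.differentiableOn one_ne_zero z₂ hz₂).differentiableAt (isOpen_ball.mem_nhds hz₂)
  have hPd : DifferentiableAt ℝ (P1fn a q p) z₂ :=
    (hP₁.differentiableOn one_ne_zero z₂ hz₂).differentiableAt (isOpen_ball.mem_nhds hz₂)
  have hQd : DifferentiableAt ℝ (Q0fn a q) z₂ :=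
    (Real.differentiableAt_tan.2 (hcos z₂ rfl).ne').comp z₂ hRd
  rw [mul_add (I * z₂), mul_left_comm _ (z₁.im : ℂ), add_re, add_re, re_ofReal_mul,
    re_mul_half_add_ofReal_div_two_I, re_mul_wirt_ofReal hPd.hasFDerivAt,
    re_mul_wirt_ofReal hQd.hasFDerivAt, fderiv_P1fn_apply_I_mul hPd hRd hS hzS hcos,
    fderiv_Q0fn_apply_I_mul (hcos z₂ rfl).ne' hRd hS hzS, mul_re, mul_im]
  linear_combination hM * ((Afn a z₂).re + Q0fn a q z₂ * (Afn a z₂).im) / 2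

/-- For `α = 0`, the holomorphic vector field
`H^{a,0} = z₁ a(z₂) ∂/∂z₁ + i z₂ ∂/∂z₂` is tangent to `M(a,0,p,q)`:
`Re[ z₁ a(z₂)(1/2 + Q₀(z₂)/(2i)) + i z₂ ((P₁)_{z₂}(z₂) + (Im z₁)(Q₀)_{z₂}(z₂)) ] = 0`
on `M(a,0,p,q) = {Re z₁ + P₁(z₂) + Q₀(z₂)·Im z₁ = 0}`. -/
theorem stmt7
    (ε₀ : ℝ) (hε₀ : 0 < ε₀)
    (a : ℕ → ℂ) (ha0 : a 0 = 0) (hane : ∃ n, a n ≠ 0)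
    (hsum : ∀ z ∈ ball (0:ℂ) ε₀, Summable fun n : ℕ => a n * z ^ n)
    (q : ℝ → ℝ) (hq0 : q 0 = 0)
    (hR : ContDiffOn ℝ 1 (Rfn a q) (ball 0 ε₀))
    (hRle : ∀ z ∈ ball (0:ℂ) ε₀, |Rfn a q z| ≤ 1)
    (p : ℝ → ℝ)
    (hP₁ : ContDiffOn ℝ 1 (P1fn a q p) (ball 0 ε₀)) :
    ∀ z₁ z₂ : ℂ, z₂ ∈ ball (0:ℂ) ε₀ →
      z₁.re + P1fn a q p z₂ + Q0fn a q z₂ * z₁.im = 0 →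
      (z₁ * Afn a z₂ * ((1 / 2 : ℂ) + ((Q0fn a q z₂ : ℝ) : ℂ) / (2 * Complex.I)) +
        Complex.I * z₂ * (wirt (fun w => ((P1fn a q p w : ℝ) : ℂ)) z₂ +
          ((z₁.im : ℝ) : ℂ) * wirt (fun w => ((Q0fn a q w : ℝ) : ℂ)) z₂)).re = 0 :=
  stmt7_general ε₀ a ha0 hsum q hR hRle p hP₁
end

section
/- With the data of the construction of M(a,α,p,q): the identity Re[ 2iα·z₂·f_{z₂}(z₂,t) + (f_t(z₂,t) − Q₀(z₂))·i·a(z₂) ] = 0 holds for all z₂ ∈ Δ_{ε₀} and all t ∈ (−δ₀,δ₀), where f_{z₂} is the Wirtinger derivative of f in z₂ and f_t = ∂f/∂t. -/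
open Complex Metric Set

/-! For real `u`, `Im (2 z u_z)` is minus the angular derivative `du(i z)`. The radial term
`q(|z|)` of `R` has no angular derivative, while `d(Re S)(i z) = Re (i z S') = -Im a`
because `z S' = a`; hence `Im (2 z R_z + a) = 0`. For `α ≠ 0`, `f(·,t)` is a function of `R`
alone with `α ∂_R f = tan (R + αt) - tan R = f_t - Q₀`, so the expression is
`(f_t - Q₀) i (2 z R_z + a)`, whose real part vanishes. For `α = 0` both terms are zero. -/

lemma summable_norm_mul_pow_of_lt {c : ℕ → ℂ} {ε r : ℝ}
    (hsum : ∀ z ∈ ball (0 : ℂ) ε, Summable fun n => c n * z ^ n) (hr : 0 ≤ r)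
    (hrε : r < ε) :
    Summable fun n => ‖c n‖ * r ^ n := by
  obtain ⟨ρ, hrρ, hρε⟩ := exists_between hrε
  have hρ : 0 < ρ := hr.trans_lt hrρ
  have hρball : ((ρ : ℝ) : ℂ) ∈ ball (0 : ℂ) ε := by
    rwa [mem_ball_zero_iff, Complex.norm_real, Real.norm_of_nonneg hρ.le]
  obtain ⟨C, hC⟩ := (hsum _ hρball).tendsto_atTop_zero.norm.bddAbove_range
  have hbound : ∀ n, ‖c n‖ * r ^ n ≤ C * (r / ρ) ^ n := fun n => by
    have hn : ‖c n‖ * ρ ^ n ≤ C := by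
      simpa [norm_mul, norm_pow, Complex.norm_real, Real.norm_of_nonneg hρ.le] using
        hC ⟨n, rfl⟩
    calc ‖c n‖ * r ^ n = ‖c n‖ * ρ ^ n * (r / ρ) ^ n := by
          rw [div_pow, mul_assoc, mul_div_cancel₀ _ (pow_pos hρ n).ne']
      _ ≤ C * (r / ρ) ^ n := by gcongr
  refine .of_nonneg_of_le (fun n => by positivity) hbound
    ((summable_geometric_of_lt_one (by positivity) ?_).mul_left C)
  rwa [div_lt_one hρ]

lemma div_natCast_succ_mul_natCast_succ_mul_pow (a y : ℂ) (n : ℕ) :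
    a / (n + 1 : ℕ) * ((n + 1 : ℕ) * y ^ (n + 1 - 1)) = a * y ^ n := by
  rw [Nat.add_sub_cancel, div_mul_eq_mul_div, mul_div_assoc,
    mul_div_cancel_left₀ _ (Nat.cast_ne_zero.mpr n.succ_ne_zero)]

lemma hasDerivAt_Sfn {a : ℕ → ℂ} {ε : ℝ}
    (hsum : ∀ z ∈ ball (0 : ℂ) ε, Summable fun n => a n * z ^ n) {z : ℂ}
    (hz : z ∈ ball (0 : ℂ) ε) :
    HasDerivAt (Sfn a) (∑' n, a n / n * (n * z ^ (n - 1))) z := by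
  obtain ⟨r, hzr, hrε⟩ := exists_between (mem_ball_zero_iff.mp hz)
  have hr : 0 < r := (norm_nonneg z).trans_lt hzr
  have hu : Summable fun n => ‖a n‖ * r ^ (n - 1) := by
    rw [← summable_nat_add_iff 1]
    simpa [pow_succ, ← mul_assoc, mul_inv_cancel_right₀ hr.ne'] using
      ((summable_nat_add_iff 1).mpr
        (summable_norm_mul_pow_of_lt hsum hr.le hrε)).mul_right r⁻¹
  have hbound : ∀ n, ∀ y ∈ ball (0 : ℂ) r,
      ‖a n / n * (n * y ^ (n - 1))‖ ≤ ‖a n‖ * r ^ (n - 1) := by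
    rintro (_ | n) y hy
    · simp
    · rw [div_natCast_succ_mul_natCast_succ_mul_pow, norm_mul, norm_pow, Nat.add_sub_cancel]
      gcongr
      exact (mem_ball_zero_iff.mp hy).le
  refine hasDerivAt_tsum_of_isPreconnected hu isOpen_ball (convex_ball _ _).isPreconnected
    (fun n y _ => (hasDerivAt_pow n y).const_mul _) hbound (mem_ball_self hr) ?_
    (mem_ball_zero_iff.mpr hzr)
  exact summable_of_ne_finset_zero (s := {0}) fun n hn => by
    simp [zero_pow (Finset.notMem_singleton.mp hn)]

lemma mul_tsum_deriv_eq_Afn {a : ℕ → ℂ} (ha0 : a 0 = 0) (z : ℂ) :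
    z * ∑' n, a n / n * (n * z ^ (n - 1)) = Afn a z := by
  rw [Afn, ← tsum_mul_left]
  congr 1 with (_ | n)
  · simp [ha0]
  · rw [div_natCast_succ_mul_natCast_succ_mul_pow, pow_succ]
    ring

lemma wirt_ofReal_of_hasFDerivAt {g : ℂ → ℝ} {L : ℂ →L[ℝ] ℝ} {z : ℂ}
    (h : HasFDerivAt g L z) :
    wirt (fun w => (g w : ℂ)) z = ((L 1 : ℂ) - I * L I) / 2 := by
  have h' : HasFDerivAt (fun w => (g w : ℂ)) (ofRealCLM.comp L) z :=
    ofRealCLM.hasFDerivAt.comp z h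
  rw [wirt, h'.fderiv]
  rfl

lemma wirt_ofReal_comp {Φ : ℝ → ℝ} {g : ℂ → ℝ} {c : ℝ} {z : ℂ}
    (hΦ : HasDerivAt Φ c (g z)) (hg : DifferentiableAt ℝ g z) :
    wirt (fun w => (Φ (g w) : ℂ)) z = c * wirt (fun w => (g w : ℂ)) z := by
  rw [wirt_ofReal_of_hasFDerivAt (g := fun w => Φ (g w)) (hΦ.comp_hasFDerivAt z hg.hasFDerivAt),
    wirt_ofReal_of_hasFDerivAt hg.hasFDerivAt]
  simp only [smul_apply, smul_eq_mul, ofReal_mul]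
  ring

lemma im_two_mul_mul_wirt_ofReal {g : ℂ → ℝ} {L : ℂ →L[ℝ] ℝ} {z : ℂ}
    (h : HasFDerivAt g L z) :
    (2 * z * wirt (fun w => (g w : ℂ)) z).im = -L (I * z) := by
  have hIz : I * z = (-z.im : ℝ) • (1 : ℂ) + z.re • I := by
    apply Complex.ext <;> simp
  rw [wirt_ofReal_of_hasFDerivAt h, hIz, map_add, map_smul, map_smul]
  simp [Complex.mul_im]
  ring

lemma apply_I_mul_eq_zero_of_hasFDerivAt_comp_norm {E : Type*} [NormedAddCommGroup E]
    [NormedSpace ℝ E] {q : ℝ → E} {L : ℂ →L[ℝ] E} {z : ℂ}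
    (h : HasFDerivAt (fun w : ℂ => q ‖w‖) L z) : L (I * z) = 0 := by
  have hrot : HasDerivAt (fun θ : ℝ => exp ((θ : ℂ) * I) * z) (I * z) 0 := by
    simpa using (((hasDerivAt_id (0 : ℝ)).ofReal_comp).mul_const I).cexp.mul_const z
  have hcomp := (h.comp_hasDerivAt_of_eq 0 hrot (by simp))
  have hconst :
      ((fun w : ℂ => q ‖w‖) ∘ fun θ : ℝ => exp ((θ : ℂ) * I) * z) = fun _ => q ‖z‖ := by
    funext θ
    simp [norm_exp_ofReal_mul_I]
  rw [hconst] at hcomp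
  exact hcomp.unique (hasDerivAt_const 0 _)

lemma apply_I_mul_of_hasFDerivAt_Rfn {a : ℕ → ℂ} {q : ℝ → ℝ} {L : ℂ →L[ℝ] ℝ} {z S' : ℂ}
    (hR : HasFDerivAt (Rfn a q) L z) (hS : HasDerivAt (Sfn a) S' z) :
    L (I * z) = (z * S').im := by
  have hq : HasFDerivAt (fun w : ℂ => q ‖w‖) (L + reCLM.comp
      ((ContinuousLinearMap.smulRight (1 : ℂ →L[ℂ] ℂ) S').restrictScalars ℝ)) z := by
    have hsplit : (fun w : ℂ => q ‖w‖) = fun w => Rfn a q w + (Sfn a w).re := by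
      funext w
      simp [Rfn]
    rw [hsplit]
    exact hR.add (reCLM.hasFDerivAt.comp z (hS.hasFDerivAt.restrictScalars ℝ))
  have := apply_I_mul_eq_zero_of_hasFDerivAt_comp_norm hq
  simp only [add_apply, ContinuousLinearMap.comp_apply,
    ContinuousLinearMap.coe_restrictScalars', ContinuousLinearMap.smulRight_apply,
    one_apply_eq_self, reCLM_apply, smul_eq_mul] at this
  rw [mul_assoc, I_mul_re] at this
  linarith

lemma im_two_mul_wirt_Rfn_add_Afn {a : ℕ → ℂ} {q : ℝ → ℝ} {ε : ℝ} (ha0 : a 0 = 0)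
    (hsum : ∀ z ∈ ball (0 : ℂ) ε, Summable fun n => a n * z ^ n) {z : ℂ}
    (hz : z ∈ ball (0 : ℂ) ε) (hR : DifferentiableAt ℝ (Rfn a q) z) :
    (2 * z * wirt (fun w => (Rfn a q w : ℂ)) z + Afn a z).im = 0 := by
  rw [add_im, im_two_mul_mul_wirt_ofReal hR.hasFDerivAt,
    apply_I_mul_of_hasFDerivAt_Rfn hR.hasFDerivAt (hasDerivAt_Sfn hsum hz),
    mul_tsum_deriv_eq_Afn ha0]
  ring

lemma hasDerivAt_log_abs_cos_add_div_cos {x y : ℝ} (hx : Real.cos x ≠ 0)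
    (hxy : Real.cos (x + y) ≠ 0) :
    HasDerivAt (fun r => Real.log |Real.cos (r + y) / Real.cos r|)
      (Real.tan x - Real.tan (x + y)) x := by
  simp only [Real.log_abs]
  refine (((hasDerivAt_id' x).add_const y).cos.fun_div (Real.hasDerivAt_cos x) hx).log
    (div_ne_zero hxy hx) |>.congr_deriv ?_
  simp only [Real.tan_eq_sin_div_cos]
  field_simp
  ring

lemma hasDerivAt_log_abs_cos_add_mul_div_cos {x α t : ℝ} (hx : Real.cos x ≠ 0)
    (hxt : Real.cos (x + α * t) ≠ 0) :
    HasDerivAt (fun s => Real.log |Real.cos (x + α * s) / Real.cos x|)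
      (-(α * Real.tan (x + α * t))) t := by
  simp only [Real.log_abs]
  refine ((((hasDerivAt_id' t).const_mul α).const_add x).cos.div_const (Real.cos x)).log
    (div_ne_zero hxt hx) |>.congr_deriv ?_
  rw [Real.tan_eq_sin_div_cos]
  field_simp

lemma cos_pos_of_abs_le_one_of_abs_le_half {x y : ℝ} (hx : |x| ≤ 1) (hy : |y| ≤ 1 / 2) :
    0 < Real.cos (x + y) := by
  have hxy := (abs_add_le x y).trans (add_le_add hx hy)
  rw [abs_le] at hxy
  apply Real.cos_pos_of_mem_Ioo
  constructor <;> linarith [Real.pi_gt_three]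

section ffn

variable {α : ℝ} {a : ℕ → ℂ} {q : ℝ → ℝ} {z : ℂ} {t : ℝ}

lemma deriv_ffn_of_ne_zero (hα : α ≠ 0) (hcos : Real.cos (Rfn a q z) ≠ 0)
    (hcost : Real.cos (Rfn a q z + α * t) ≠ 0) :
    deriv (fun s => ffn α a q z s) t = Real.tan (Rfn a q z + α * t) := by
  simp only [ffn, if_neg hα]
  exact ((hasDerivAt_log_abs_cos_add_mul_div_cos hcos hcost).const_mul _).deriv.trans
    (by field_simp)

lemma wirt_ffn_of_ne_zero (hα : α ≠ 0) (hcos : Real.cos (Rfn a q z) ≠ 0)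
    (hcost : Real.cos (Rfn a q z + α * t) ≠ 0) (hR : DifferentiableAt ℝ (Rfn a q) z) :
    wirt (fun w => (ffn α a q w t : ℂ)) z =
      ((Real.tan (Rfn a q z + α * t) - Real.tan (Rfn a q z)) / α : ℝ) *
        wirt (fun w => (Rfn a q w : ℂ)) z := by
  simp only [ffn, if_neg hα]
  refine (wirt_ofReal_comp
    (Φ := fun r => -(1 / α) * Real.log |Real.cos (r + α * t) / Real.cos r|)
    ((hasDerivAt_log_abs_cos_add_div_cos hcos hcost).const_mul _) hR).trans ?_
  congr 2
  ring

end ffn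

theorem stmt13_general
    (ε₀ : ℝ) (α : ℝ)
    (a : ℕ → ℂ) (ha0 : a 0 = 0)
    (hsum : ∀ z ∈ ball (0:ℂ) ε₀, Summable fun n : ℕ => a n * z ^ n)
    (q : ℝ → ℝ)
    (hR : ContDiffOn ℝ 1 (Rfn a q) (ball 0 ε₀))
    (hRle : ∀ z ∈ ball (0:ℂ) ε₀, |Rfn a q z| ≤ 1) :
    ∀ z ∈ ball (0:ℂ) ε₀, ∀ t : ℝ, (α ≠ 0 → |t| < 1 / (2 * |α|)) →
      (2 * Complex.I * (α : ℂ) * z * wirt (fun w => ((ffn α a q w t : ℝ) : ℂ)) z +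
        ((deriv (fun s : ℝ => ffn α a q z s) t - Q0fn a q z : ℝ) : ℂ) *
          Complex.I * Afn a z).re = 0 := by
  intro z hz t ht
  rcases eq_or_ne α 0 with rfl | hα
  · simp [ffn, Q0fn]
  have hαt : |α * t| ≤ 1 / 2 := by
    rw [abs_mul]
    calc |α| * |t| ≤ |α| * (1 / (2 * |α|)) := by gcongr; exact (ht hα).le
      _ = 1 / 2 := by field_simp
  have hcos : Real.cos (Rfn a q z) ≠ 0 := by
    simpa using (cos_pos_of_abs_le_one_of_abs_le_half (hRle z hz) (y := 0) (by norm_num)).ne'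
  have hcost := (cos_pos_of_abs_le_one_of_abs_le_half (hRle z hz) hαt).ne'
  have hRz : DifferentiableAt ℝ (Rfn a q) z :=
    (hR.differentiableOn one_ne_zero).differentiableAt (isOpen_ball.mem_nhds hz)
  have hα' : (α : ℂ) ≠ 0 := ofReal_ne_zero.mpr hα
  rw [wirt_ffn_of_ne_zero hα hcos hcost hRz, deriv_ffn_of_ne_zero hα hcos hcost, Q0fn]
  set A := Real.tan (Rfn a q z + α * t)
  set B := Real.tan (Rfn a q z)
  set X := 2 * z * wirt (fun w => (Rfn a q w : ℂ)) z + Afn a z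
  calc _ = (((A - B : ℝ) : ℂ) * (I * X)).re := by
        congr 1
        simp only [X, ofReal_sub, ofReal_div]
        field_simp
    _ = 0 := by
        rw [re_ofReal_mul, I_mul_re, im_two_mul_wirt_Rfn_add_Afn ha0 hsum hz hRz, neg_zero,
          mul_zero]

/-- Identity (v) of the construction of `M(a,α,p,q)`:
`Re[ 2iα z₂ f_{z₂}(z₂,t) + (f_t(z₂,t) − Q₀(z₂)) i a(z₂) ] = 0` for all `z₂ ∈ Δ_{ε₀}` and
`t ∈ (−δ₀, δ₀)` (where `δ₀ = 1/(2|α|)` if `α ≠ 0` and `δ₀ = +∞` if `α = 0`). -/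
theorem stmt13
    (ε₀ : ℝ) (hε₀ : 0 < ε₀) (α : ℝ)
    (a : ℕ → ℂ) (ha0 : a 0 = 0) (hane : ∃ n, a n ≠ 0)
    (hsum : ∀ z ∈ ball (0:ℂ) ε₀, Summable fun n : ℕ => a n * z ^ n)
    (q : ℝ → ℝ) (hq0 : q 0 = 0)
    (hR : ContDiffOn ℝ 1 (Rfn a q) (ball 0 ε₀))
    (hRle : ∀ z ∈ ball (0:ℂ) ε₀, |Rfn a q z| ≤ 1) :
    ∀ z ∈ ball (0:ℂ) ε₀, ∀ t : ℝ, (α ≠ 0 → |t| < 1 / (2 * |α|)) →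
      (2 * Complex.I * (α : ℂ) * z * wirt (fun w => ((ffn α a q w t : ℝ) : ℂ)) z +
        ((deriv (fun s : ℝ => ffn α a q z s) t - Q0fn a q z : ℝ) : ℂ) *
          Complex.I * Afn a z).re = 0 :=
  stmt13_general ε₀ α a ha0 hsum q hR hRle
end
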